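/- Let ρ₀ be a smooth function on the strip S = T×[−π,π], and let (ρ,u,p) be a global smooth solution of the IPM system on S with ρ(·,0) = ρ₀. Define E(t) = ∫_S x₂ ρ(x,t) dx. Then for every t ≥ 0, E'(t) = −∫_S |u(x,t)|² dx; in particular E is nonincreasing, and ∫₀^∞ ∫_S |u(x,t)|² dx dt ≤ E(0) + 2π³ sup|ρ₀|. -/

import Mathlib

/-!
Testing the transport equation against `x₂` and integrating by parts (periodicity in `x₁`, no
flow through `x₂ = ±π`, `∇·u = 0`) gives `E' = ∫_S ρ u₂`; testing `∇·u = 0` and Darcy's law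
against `p` gives `∫_S ρ u₂ = -∫_S |u|²`. Since `ρ` is transported by a divergence-free field
tangent to the boundary, `∫_S G(ρ)` is conserved for every `C¹` function `G`; a smooth `G ≥ 0`
vanishing exactly on `[-M, M]`, `M = sup |ρ₀|`, yields `|ρ| ≤ M`, hence `E ≥ -2π³M`, and
integrating `E' = -∫_S |u|²` over `(0, ∞)` gives the bound.
-/

open Real MeasureTheory Filter Topology
open scoped ENNReal NNReal

noncomputable section

/-- Points of the plane; functions on the strip `S = T × [-π,π]` are identified with functions on
`ℝ × [-π,π]` that are `2π`-periodic in `x₁` (smooth functions on the closed strip are viewed as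
restrictions of smooth functions on `ℝ²`). -/
abbrev Pt : Type := ℝ × ℝ

/-- `2π`-periodicity in the first variable. -/
def Per1 (f : Pt → ℝ) : Prop := ∀ x : Pt, f (x.1 + 2 * π, x.2) = f x

/-- Partial derivative in the first space variable. -/
def pd1 (f : Pt → ℝ) (x : Pt) : ℝ := deriv (fun y => f (y, x.2)) x.1

/-- Partial derivative in the second space variable. -/
def pd2 (f : Pt → ℝ) (x : Pt) : ℝ := deriv (fun y => f (x.1, y)) x.2

/-- The fundamental domain `[-π,π] × [-π,π]` of the strip `S`. -/
def QS : Set Pt := Set.Icc (-π) π ×ˢ Set.Icc (-π) π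

/-- The Dirichlet eigenfunctions in the vertical variable:
`b_q(y) = cos(qy/2)` for `q` odd and `b_q(y) = sin(qy/2)` for `q` even. -/
def bq (q : ℕ) (y : ℝ) : ℝ :=
  if q % 2 = 1 then Real.cos (q * y / 2) else Real.sin (q * y / 2)

/-- Eigenfunction coefficients on the strip:
`c_{p,q}(f) = (2π²)⁻¹ ∫_S f(x) e^{-ipx₁} b_q(x₂) dx`. -/
def scoef (f : Pt → ℝ) (pq : ℤ × ℕ) : ℂ :=
  ((2 * π ^ 2 : ℝ))⁻¹ *
    ∫ x in QS, (f x : ℂ) * Complex.exp (-Complex.I * (((pq.1 : ℝ) * x.1 : ℝ) : ℂ)) *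
      ((bq pq.2 x.2 : ℝ) : ℂ)

/-- Homogeneous Sobolev norm on the strip (valued in `ℝ≥0∞`):
`‖f‖_{Ḣ^s(S)}² = 2π² Σ_{p∈ℤ, q≥1} (p² + q²/4)^s |c_{p,q}(f)|²`. -/
def sobS (s : ℝ) (f : Pt → ℝ) : ℝ≥0∞ :=
  (ENNReal.ofReal (2 * π ^ 2) *
    ∑' pq : ℤ × ℕ, (if 1 ≤ pq.2 then
      ENNReal.ofReal (((pq.1 : ℝ) ^ 2 + (pq.2 : ℝ) ^ 2 / 4) ^ s) * (‖scoef f pq‖₊ : ℝ≥0∞) ^ 2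
      else 0)) ^ (1/2 : ℝ)

/-- Inhomogeneous Sobolev norm on the strip: `‖f‖_{H^s(S)}² = ‖f‖_{Ḣ^s(S)}² + ‖f‖_{L²(S)}²`. -/
def hsobS (s : ℝ) (f : Pt → ℝ) : ℝ≥0∞ :=
  (sobS s f ^ 2 + ∫⁻ x in QS, ENNReal.ofReal (f x ^ 2)) ^ (1/2 : ℝ)

/-- A global smooth solution of the IPM system on the strip `S = T × [-π,π]`:
`∂_t ρ + u·∇ρ = 0`, `∇·u = 0`, `u + ∇p = -(0,ρ)` on `S` for all `t ≥ 0`, with `ρ, u, p` smooth,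
`2π`-periodic in `x₁`, and the no-flow condition `u₂ = 0` on `x₂ = ±π`. -/
structure IsIPMSolS (ρ : Pt → ℝ → ℝ) (u : Pt → ℝ → Pt) (p : Pt → ℝ → ℝ) : Prop where
  smooth_rho : ContDiff ℝ (⊤ : ℕ∞) fun q : Pt × ℝ => ρ q.1 q.2
  smooth_u : ContDiff ℝ (⊤ : ℕ∞) fun q : Pt × ℝ => u q.1 q.2
  smooth_p : ContDiff ℝ (⊤ : ℕ∞) fun q : Pt × ℝ => p q.1 q.2
  per_rho : ∀ t : ℝ, 0 ≤ t → Per1 fun x => ρ x t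
  per_u1 : ∀ t : ℝ, 0 ≤ t → Per1 fun x => (u x t).1
  per_u2 : ∀ t : ℝ, 0 ≤ t → Per1 fun x => (u x t).2
  per_p : ∀ t : ℝ, 0 ≤ t → Per1 fun x => p x t
  transport : ∀ x : Pt, x.2 ∈ Set.Icc (-π) π → ∀ t : ℝ, 0 ≤ t →
    deriv (fun τ => ρ x τ) t
      + (u x t).1 * pd1 (fun y => ρ y t) x + (u x t).2 * pd2 (fun y => ρ y t) x = 0
  incomp : ∀ x : Pt, x.2 ∈ Set.Icc (-π) π → ∀ t : ℝ, 0 ≤ t →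
    pd1 (fun y => (u y t).1) x + pd2 (fun y => (u y t).2) x = 0
  darcy1 : ∀ x : Pt, x.2 ∈ Set.Icc (-π) π → ∀ t : ℝ, 0 ≤ t →
    (u x t).1 + pd1 (fun y => p y t) x = 0
  darcy2 : ∀ x : Pt, x.2 ∈ Set.Icc (-π) π → ∀ t : ℝ, 0 ≤ t →
    (u x t).2 + pd2 (fun y => p y t) x = -ρ x t
  noflow_top : ∀ x₁ : ℝ, ∀ t : ℝ, 0 ≤ t → (u (x₁, π) t).2 = 0
  noflow_bot : ∀ x₁ : ℝ, ∀ t : ℝ, 0 ≤ t → (u (x₁, -π) t).2 = 0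

open Set

section ParametricIntegral

variable {X : Type*} [TopologicalSpace X] [T2Space X] [MeasurableSpace X] [OpensMeasurableSpace X]
  {μ : Measure X} [IsFiniteMeasureOnCompacts μ] {K : Set X}

theorem hasDerivAt_setIntegral_of_continuous (hK : IsCompact K) {H H' : X → ℝ → ℝ}
    (hH : Continuous (Function.uncurry H)) (hH' : Continuous (Function.uncurry H'))
    (hderiv : ∀ x t, HasDerivAt (H x) (H' x t) t) (t₀ : ℝ) :
    HasDerivAt (fun t => ∫ x in K, H x t ∂μ) (∫ x in K, H' x t₀ ∂μ) t₀ := by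
  obtain ⟨C, hC⟩ := (hK.prod (isCompact_closedBall t₀ 1)).exists_bound_of_continuousOn
    hH'.continuousOn
  have hmeas : ∀ t, AEStronglyMeasurable (fun x => H x t) (μ.restrict K) := fun t =>
    (hH.comp (continuous_id.prodMk continuous_const)).aestronglyMeasurable
  refine (hasDerivAt_integral_of_dominated_loc_of_deriv_le (bound := fun _ => C)
    (Metric.ball_mem_nhds t₀ one_pos) (Eventually.of_forall hmeas)
    ((hH.comp (continuous_id.prodMk continuous_const)).continuousOn.integrableOn_compact hK)
    (hH'.comp (continuous_id.prodMk continuous_const)).aestronglyMeasurable ?_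
    (integrableOn_const hK.measure_ne_top) (Eventually.of_forall fun x t _ => hderiv x t)).2
  refine (ae_restrict_iff' hK.isClosed.measurableSet).2 (Eventually.of_forall fun x hx t ht => ?_)
  exact hC (x, t) ⟨hx, Metric.ball_subset_closedBall ht⟩

end ParametricIntegral

theorem continuous_deriv_snd {E : Type*} [NormedAddCommGroup E] [NormedSpace ℝ E]
    {Φ : E × ℝ → ℝ} (hΦ : ContDiff ℝ 1 Φ) :
    Continuous fun q : E × ℝ => deriv (fun τ => Φ (q.1, τ)) q.2 := by
  have h : ∀ q : E × ℝ, deriv (fun τ => Φ (q.1, τ)) q.2 = fderiv ℝ Φ q (0, 1) := fun q =>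
    ((hΦ.differentiable one_ne_zero q).hasFDerivAt.comp_hasDerivAt q.2
      ((hasDerivAt_const q.2 q.1).prodMk (hasDerivAt_id q.2))).deriv
  simp only [h]
  exact (hΦ.continuous_fderiv one_ne_zero).clm_apply continuous_const

theorem antitoneOn_Ici_of_hasDerivAt_neg {E D : ℝ → ℝ} {a : ℝ}
    (hE : ∀ t ∈ Ici a, HasDerivAt E (-D t) t) (hD : ∀ t ∈ Ioi a, 0 ≤ D t) :
    AntitoneOn E (Ici a) := by
  refine antitoneOn_of_hasDerivWithinAt_nonpos (convex_Ici a)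
    (fun t ht => (hE t ht).continuousAt.continuousWithinAt)
    (fun t ht => (hE t (interior_subset ht)).hasDerivWithinAt) fun t ht => ?_
  rw [interior_Ici] at ht
  exact neg_nonpos.2 (hD t ht)

theorem lintegral_Ioi_le_of_hasDerivAt_neg {E D : ℝ → ℝ} {a c : ℝ}
    (hE : ∀ t ∈ Ici a, HasDerivAt E (-D t) t) (hD : ∀ t ∈ Ioi a, 0 ≤ D t)
    (hc : ∀ t ∈ Ici a, c ≤ E t) :
    ∫⁻ t in Ioi a, ENNReal.ofReal (D t) ≤ ENNReal.ofReal (E a - c) := by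
  have hanti := antitoneOn_Ici_of_hasDerivAt_neg hE hD
  have hanti' : Antitone fun t => E (max a t) := fun s t hst =>
    hanti (le_max_left a s) (le_max_left a t) (max_le_max_left a hst)
  obtain ⟨l, hl⟩ : ∃ l, Tendsto E atTop (𝓝 l) := by
    refine ⟨_, (tendsto_atTop_ciInf hanti' ?_).congr' ?_⟩
    · exact ⟨c, by rintro _ ⟨t, rfl⟩; exact hc _ (le_max_left a t)⟩
    · filter_upwards [eventually_ge_atTop a] with t ht
      rw [max_eq_right ht]
  have hcl : c ≤ l := ge_of_tendsto hl ((eventually_ge_atTop a).mono hc)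
  have hneg : ∀ t ∈ Ioi a, -D t ≤ 0 := fun t ht => neg_nonpos.2 (hD t ht)
  have hint : IntegrableOn D (Ioi a) := by
    simpa using (integrableOn_Ioi_deriv_of_nonpos' hE hneg hl).neg
  have hval : ∫ t in Ioi a, D t = E a - l := by
    have := integral_Ioi_of_hasDerivAt_of_nonpos' hE hneg hl
    rw [integral_neg] at this
    linarith
  rw [← ofReal_integral_eq_lintegral_ofReal hint ((ae_restrict_iff' measurableSet_Ioi).2
    (Eventually.of_forall hD)), hval]
  exact ENNReal.ofReal_le_ofReal (by linarith)

theorem measurableSet_QS : MeasurableSet QS := measurableSet_Icc.prod measurableSet_Icc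

theorem isCompact_QS : IsCompact QS := isCompact_Icc.prod isCompact_Icc

theorem Continuous.integrableOn_QS {f : Pt → ℝ} (hf : Continuous f) : IntegrableOn f QS :=
  hf.continuousOn.integrableOn_compact isCompact_QS

theorem Per1.apply_pi {f : Pt → ℝ} (hf : Per1 f) (y : ℝ) : f (π, y) = f (-π, y) := by
  simpa [show -π + 2 * π = π by ring] using hf (-π, y)

theorem integral_abs_neg_to_self {a : ℝ} (ha : 0 ≤ a) : ∫ x in (-a)..a, |x| = a ^ 2 := by
  have hint : ∀ b c : ℝ, IntervalIntegrable (fun x : ℝ => |x|) volume b c := fun b c =>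
    continuous_abs.intervalIntegrable b c
  have hpos : ∫ x in (0 : ℝ)..a, |x| = a ^ 2 / 2 := by
    rw [intervalIntegral.integral_congr (g := fun x => x) fun x hx => abs_of_nonneg ?_, integral_id]
    · ring
    · exact (uIcc_of_le ha ▸ hx).1
  have hneg : ∫ x in (-a)..0, |x| = ∫ x in (0 : ℝ)..a, |x| := by
    simpa using (intervalIntegral.integral_comp_neg (a := 0) (b := a) (fun x : ℝ => |x|)).symm
  rw [← intervalIntegral.integral_add_adjacent_intervals (hint _ 0) (hint 0 _), hneg, hpos]
  ring

theorem integral_abs_snd_QS : ∫ x in QS, |x.2| = 2 * π ^ 3 := by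
  have h := setIntegral_prod_mul (μ := volume) (ν := volume) (fun _ : ℝ => (1 : ℝ))
    (fun y : ℝ => |y|) (Icc (-π) π) (Icc (-π) π)
  simp only [one_mul] at h
  rw [QS, Measure.volume_eq_prod, h, setIntegral_const, integral_Icc_eq_integral_Ioc,
    ← intervalIntegral.integral_of_le (by linarith [pi_pos]), integral_abs_neg_to_self pi_pos.le,
    Real.volume_real_Icc_of_le (by linarith [pi_pos])]
  simp only [smul_eq_mul]
  ring

section PartialDerivatives

variable {f g : Pt → ℝ}

theorem hasDerivAt_pd1 (hf : Differentiable ℝ f) (x : Pt) :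
    HasDerivAt (fun y => f (y, x.2)) (pd1 f x) x.1 :=
  (hf.comp (differentiable_id.prodMk (differentiable_const _))).differentiableAt.hasDerivAt

theorem hasDerivAt_pd2 (hf : Differentiable ℝ f) (x : Pt) :
    HasDerivAt (fun y => f (x.1, y)) (pd2 f x) x.2 :=
  (hf.comp ((differentiable_const _).prodMk differentiable_id)).differentiableAt.hasDerivAt

theorem pd1_mul (hf : Differentiable ℝ f) (hg : Differentiable ℝ g) (x : Pt) :
    pd1 (fun y => f y * g y) x = pd1 f x * g x + f x * pd1 g x :=
  ((hasDerivAt_pd1 hf x).mul (hasDerivAt_pd1 hg x)).deriv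

theorem pd2_mul (hf : Differentiable ℝ f) (hg : Differentiable ℝ g) (x : Pt) :
    pd2 (fun y => f y * g y) x = pd2 f x * g x + f x * pd2 g x :=
  ((hasDerivAt_pd2 hf x).mul (hasDerivAt_pd2 hg x)).deriv

theorem pd1_comp {G : ℝ → ℝ} (hG : Differentiable ℝ G) (hf : Differentiable ℝ f)
    (x : Pt) :
    pd1 (fun y => G (f y)) x = deriv G (f x) * pd1 f x :=
  ((hG (f x)).hasDerivAt.comp x.1 (hasDerivAt_pd1 hf x)).deriv

theorem pd2_comp {G : ℝ → ℝ} (hG : Differentiable ℝ G) (hf : Differentiable ℝ f)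
    (x : Pt) :
    pd2 (fun y => G (f y)) x = deriv G (f x) * pd2 f x :=
  ((hG (f x)).hasDerivAt.comp x.2 (hasDerivAt_pd2 hf x)).deriv

theorem pd1_eq_fderiv (hf : Differentiable ℝ f) (x : Pt) : pd1 f x = fderiv ℝ f x (1, 0) := by
  have hl : HasDerivAt (fun y : ℝ => ((y, x.2) : Pt)) (1, 0) x.1 :=
    (hasDerivAt_id x.1).prodMk (hasDerivAt_const x.1 x.2)
  exact ((hf x).hasFDerivAt.comp_hasDerivAt x.1 hl).deriv

theorem pd2_eq_fderiv (hf : Differentiable ℝ f) (x : Pt) : pd2 f x = fderiv ℝ f x (0, 1) := by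
  have hl : HasDerivAt (fun y : ℝ => ((x.1, y) : Pt)) (0, 1) x.2 :=
    (hasDerivAt_const x.2 x.1).prodMk (hasDerivAt_id x.2)
  exact ((hf x).hasFDerivAt.comp_hasDerivAt x.2 hl).deriv

theorem pd1_snd (x : Pt) : pd1 Prod.snd x = 0 := by simp [pd1]

theorem pd2_snd (x : Pt) : pd2 Prod.snd x = 1 := by simp [pd2]

end PartialDerivatives

theorem integral_divergence_QS {A B : Pt → ℝ} (hA : ContDiff ℝ 1 A) (hB : ContDiff ℝ 1 B)
    (hAper : ∀ y, A (π, y) = A (-π, y)) (hBtop : ∀ z, B (z, π) = 0)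
    (hBbot : ∀ z, B (z, -π) = 0) :
    ∫ x in QS, (pd1 A x + pd2 B x) = 0 := by
  have hA' : Differentiable ℝ A := hA.differentiable one_ne_zero
  have hB' : Differentiable ℝ B := hB.differentiable one_ne_zero
  have hQS : QS = Icc ((-π, -π) : Pt) (π, π) := by rw [QS, Icc_prod_Icc]
  have hpd : ∀ x, pd1 A x + pd2 B x = fderiv ℝ A x (1, 0) + fderiv ℝ B x (0, 1) := fun x => by
    rw [pd1_eq_fderiv hA', pd2_eq_fderiv hB']
  have hcont : Continuous fun x : Pt => fderiv ℝ A x (1, 0) + fderiv ℝ B x (0, 1) :=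
    ((hA.continuous_fderiv one_ne_zero).clm_apply continuous_const).add
      ((hB.continuous_fderiv one_ne_zero).clm_apply continuous_const)
  simp only [hpd]
  rw [hQS, integral_divergence_prod_Icc_of_hasFDerivAt_off_countable_of_le A B
    (fderiv ℝ A) (fderiv ℝ B) ((-π, -π) : Pt) (π, π) (by simp [Prod.le_def, pi_pos.le])
    ∅ countable_empty hA'.continuous.continuousOn hB'.continuous.continuousOn
    (fun x _ => (hA' x).hasFDerivAt) (fun x _ => (hB' x).hasFDerivAt)
    (hcont.continuousOn.integrableOn_compact (hQS ▸ isCompact_QS))]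
  simp [hAper, hBtop, hBbot]

def ipmEnergy (ρ : Pt → ℝ → ℝ) (t : ℝ) : ℝ := ∫ x in QS, x.2 * ρ x t

def ipmDissipation (u : Pt → ℝ → Pt) (t : ℝ) : ℝ :=
  ∫ x in QS, ((u x t).1 ^ 2 + (u x t).2 ^ 2)

theorem contDiff_slice {Φ : Pt → ℝ → ℝ}
    (hΦ : ContDiff ℝ (⊤ : ℕ∞) fun q : Pt × ℝ => Φ q.1 q.2) (t : ℝ) :
    ContDiff ℝ 1 fun y => Φ y t :=
  (hΦ.of_le (by exact_mod_cast le_top)).comp (contDiff_id.prodMk contDiff_const)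

namespace IsIPMSolS

variable {ρ : Pt → ℝ → ℝ} {u : Pt → ℝ → Pt} {p : Pt → ℝ → ℝ}
  (hsol : IsIPMSolS ρ u p)
include hsol

theorem contDiff_rho_slice (t : ℝ) : ContDiff ℝ 1 fun y => ρ y t :=
  contDiff_slice hsol.smooth_rho t

theorem contDiff_u1_slice (t : ℝ) : ContDiff ℝ 1 fun y => (u y t).1 :=
  contDiff_slice (Φ := fun y t => (u y t).1) (contDiff_fst.comp hsol.smooth_u) t

theorem contDiff_u2_slice (t : ℝ) : ContDiff ℝ 1 fun y => (u y t).2 :=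
  contDiff_slice (Φ := fun y t => (u y t).2) (contDiff_snd.comp hsol.smooth_u) t

theorem contDiff_p_slice (t : ℝ) : ContDiff ℝ 1 fun y => p y t :=
  contDiff_slice hsol.smooth_p t

theorem integral_u_mul_grad_eq_zero {t : ℝ} (ht : 0 ≤ t) {f : Pt → ℝ}
    (hf : ContDiff ℝ 1 f) (hper : Per1 f) :
    ∫ x in QS, ((u x t).1 * pd1 f x + (u x t).2 * pd2 f x) = 0 := by
  have hu1 := hsol.contDiff_u1_slice t
  have hu2 := hsol.contDiff_u2_slice t
  have hf' := hf.differentiable one_ne_zero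
  have hdiv := integral_divergence_QS (hf.mul hu1) (hf.mul hu2)
    (fun y => by rw [hper.apply_pi, (hsol.per_u1 t ht).apply_pi])
    (fun z => by simp [hsol.noflow_top z t ht]) (fun z => by simp [hsol.noflow_bot z t ht])
  rw [← hdiv]
  refine setIntegral_congr_fun measurableSet_QS fun x hx => ?_
  have hinc := hsol.incomp x hx.2 t ht
  rw [pd1_mul hf' (hu1.differentiable one_ne_zero), pd2_mul hf' (hu2.differentiable one_ne_zero)]
  linear_combination (-f x) * hinc

theorem hasDerivAt_rho_time (x : Pt) (t : ℝ) :
    HasDerivAt (fun τ => ρ x τ) (deriv (fun τ => ρ x τ) t) t :=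
  ((hsol.smooth_rho.differentiable (by simp)).comp
    ((differentiable_const x).prodMk differentiable_id)).differentiableAt.hasDerivAt

theorem continuous_rho_time : Continuous fun q : Pt × ℝ => deriv (fun τ => ρ q.1 τ) q.2 :=
  continuous_deriv_snd (Φ := fun q : Pt × ℝ => ρ q.1 q.2)
    (hsol.smooth_rho.of_le (by exact_mod_cast le_top))

theorem u_mul_grad_rho_eq {x : Pt} (hx : x ∈ QS) {t : ℝ} (ht : 0 ≤ t) :
    (u x t).1 * pd1 (fun y => ρ y t) x + (u x t).2 * pd2 (fun y => ρ y t) x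
      = -deriv (fun τ => ρ x τ) t := by
  linear_combination hsol.transport x hx.2 t ht

theorem integral_snd_mul_rho_time {t : ℝ} (ht : 0 ≤ t) :
    ∫ x in QS, x.2 * deriv (fun τ => ρ x τ) t = ∫ x in QS, ρ x t * (u x t).2 := by
  have hρ := hsol.contDiff_rho_slice t
  have hρ' := hρ.differentiable one_ne_zero
  have h := hsol.integral_u_mul_grad_eq_zero ht (contDiff_snd.mul hρ)
    (fun x => by simp [hsol.per_rho t ht x])
  rw [setIntegral_congr_fun measurableSet_QS
    (g := fun x => ρ x t * (u x t).2 - x.2 * deriv (fun τ => ρ x τ) t) fun x hx => by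
      simp only
      rw [pd1_mul differentiable_snd hρ', pd2_mul differentiable_snd hρ', pd1_snd, pd2_snd]
      linear_combination x.2 * hsol.u_mul_grad_rho_eq hx ht,
    integral_sub, sub_eq_zero] at h
  · exact h.symm
  · exact (hρ.continuous.mul (hsol.contDiff_u2_slice t).continuous).integrableOn_QS
  · exact (continuous_snd.mul (hsol.continuous_rho_time.comp
      (continuous_id.prodMk continuous_const))).integrableOn_QS

theorem integral_rho_mul_u2 {t : ℝ} (ht : 0 ≤ t) :
    ∫ x in QS, ρ x t * (u x t).2 = -ipmDissipation u t := by
  have hu1 := (hsol.contDiff_u1_slice t).continuous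
  have hu2 := (hsol.contDiff_u2_slice t).continuous
  have h := hsol.integral_u_mul_grad_eq_zero ht (hsol.contDiff_p_slice t) (hsol.per_p t ht)
  rw [setIntegral_congr_fun measurableSet_QS
    (g := fun x => -(ρ x t * (u x t).2) - ((u x t).1 ^ 2 + (u x t).2 ^ 2)) fun x hx => by
      linear_combination (u x t).1 * hsol.darcy1 x hx.2 t ht
        + (u x t).2 * hsol.darcy2 x hx.2 t ht,
    integral_sub, integral_neg, sub_eq_zero] at h
  · rw [ipmDissipation, ← h, neg_neg]
  · exact ((hsol.contDiff_rho_slice t).continuous.mul hu2).neg.integrableOn_QS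
  · exact ((hu1.pow 2).add (hu2.pow 2)).integrableOn_QS

theorem hasDerivAt_ipmEnergy {t : ℝ} (ht : 0 ≤ t) :
    HasDerivAt (ipmEnergy ρ) (-ipmDissipation u t) t := by
  rw [← hsol.integral_rho_mul_u2 ht, ← hsol.integral_snd_mul_rho_time ht]
  exact hasDerivAt_setIntegral_of_continuous (H := fun x τ => x.2 * ρ x τ)
    (H' := fun x τ => x.2 * deriv (fun τ => ρ x τ) τ) isCompact_QS
    ((continuous_snd.comp continuous_fst).mul hsol.smooth_rho.continuous)
    ((continuous_snd.comp continuous_fst).mul hsol.continuous_rho_time)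
    (fun x τ => (hsol.hasDerivAt_rho_time x τ).const_mul x.2) t

theorem integral_comp_rho_eq {G : ℝ → ℝ} (hG : ContDiff ℝ 1 G) {t : ℝ} (ht : 0 ≤ t) :
    ∫ x in QS, G (ρ x t) = ∫ x in QS, G (ρ x 0) := by
  have hG' := hG.differentiable one_ne_zero
  have hderiv : ∀ τ, HasDerivAt (fun τ => ∫ x in QS, G (ρ x τ))
      (∫ x in QS, deriv G (ρ x τ) * deriv (fun s => ρ x s) τ) τ :=
    hasDerivAt_setIntegral_of_continuous (H := fun x τ => G (ρ x τ))
      (H' := fun x τ => deriv G (ρ x τ) * deriv (fun s => ρ x s) τ) isCompact_QS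
      (hG.continuous.comp hsol.smooth_rho.continuous)
      (((hG.continuous_deriv le_rfl).comp hsol.smooth_rho.continuous).mul
        hsol.continuous_rho_time)
      (fun x τ => (hG' _).hasDerivAt.comp τ (hsol.hasDerivAt_rho_time x τ))
  have hzero : ∀ τ, 0 ≤ τ →
      ∫ x in QS, deriv G (ρ x τ) * deriv (fun s => ρ x s) τ = 0 := by
    intro τ hτ
    have hρ := hsol.contDiff_rho_slice τ
    have hρ' := hρ.differentiable one_ne_zero
    have h := hsol.integral_u_mul_grad_eq_zero hτ (hG.comp hρ)
      (fun x => by simp [Function.comp, hsol.per_rho τ hτ x])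
    rwa [setIntegral_congr_fun measurableSet_QS
      (g := fun x => -(deriv G (ρ x τ) * deriv (fun s => ρ x s) τ)) fun x hx => by
        simp only [Function.comp_def]
        rw [pd1_comp hG' hρ', pd2_comp hG' hρ']
        linear_combination deriv G (ρ x τ) * hsol.u_mul_grad_rho_eq hx hτ,
      integral_neg, neg_eq_zero] at h
  exact constant_of_has_deriv_right_zero
    (fun τ _ => (hderiv τ).continuousAt.continuousWithinAt)
    (fun τ hτ => by simpa only [hzero τ hτ.1] using (hderiv τ).hasDerivWithinAt)
    t ⟨ht, le_rfl⟩

theorem ae_abs_rho_le {M : ℝ} (h0 : ∀ x ∈ QS, |ρ x 0| ≤ M) {t : ℝ} (ht : 0 ≤ t) :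
    ∀ᵐ x ∂volume.restrict QS, |ρ x t| ≤ M := by
  have hM : 0 ≤ M := (abs_nonneg _).trans (h0 (0, 0) ⟨⟨by linarith [pi_pos], pi_pos.le⟩,
    ⟨by linarith [pi_pos], pi_pos.le⟩⟩)
  set G : ℝ → ℝ := fun s => expNegInvGlue (s ^ 2 - M ^ 2)
  have hG : ContDiff ℝ 1 G := expNegInvGlue.contDiff.comp ((contDiff_id.pow 2).sub contDiff_const)
  have hGt : ∫ x in QS, G (ρ x t) = 0 := by
    rw [hsol.integral_comp_rho_eq hG ht, setIntegral_congr_fun measurableSet_QS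
      (g := fun _ => 0) fun x hx => expNegInvGlue.zero_of_nonpos ?_, integral_zero]
    nlinarith [sq_abs (ρ x 0), abs_nonneg (ρ x 0), h0 x hx]
  have hae := (setIntegral_eq_zero_iff_of_nonneg_ae
    (Eventually.of_forall fun x => expNegInvGlue.nonneg _)
    (hG.continuous.comp (hsol.contDiff_rho_slice t).continuous).integrableOn_QS).1 hGt
  filter_upwards [hae] with x hx
  by_contra! hlt
  have hpos : 0 < ρ x t ^ 2 - M ^ 2 := by nlinarith [sq_abs (ρ x t)]
  exact (expNegInvGlue.pos_of_pos hpos).ne' hx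

theorem neg_le_ipmEnergy {M : ℝ} (h0 : ∀ x ∈ QS, |ρ x 0| ≤ M) {t : ℝ} (ht : 0 ≤ t) :
    -(2 * π ^ 3 * M) ≤ ipmEnergy ρ t := by
  have hρ := (hsol.contDiff_rho_slice t).continuous
  calc -(2 * π ^ 3 * M) = ∫ x in QS, -(|x.2| * M) := by
        rw [integral_neg, integral_mul_const, integral_abs_snd_QS]
    _ ≤ ∫ x in QS, x.2 * ρ x t := by
        refine setIntegral_mono_ae_restrict
          (continuous_snd.abs.mul continuous_const).neg.integrableOn_QS
          (continuous_snd.mul hρ).integrableOn_QS ?_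
        filter_upwards [hsol.ae_abs_rho_le h0 ht] with x hx
        have := mul_le_mul_of_nonneg_left hx (abs_nonneg x.2)
        rw [← abs_mul] at this
        linarith [neg_abs_le (x.2 * ρ x t)]

end IsIPMSolS

theorem ipm_strip_energy_general
    (ρ₀ : Pt → ℝ)
    (ρ : Pt → ℝ → ℝ) (u : Pt → ℝ → Pt) (p : Pt → ℝ → ℝ)
    (hsol : IsIPMSolS ρ u p)
    (hinit : ∀ x : Pt, ρ x 0 = ρ₀ x) :
    (∀ t : ℝ, 0 ≤ t →
        HasDerivWithinAt (fun τ => ∫ x in QS, x.2 * ρ x τ)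
          (-(∫ x in QS, ((u x t).1 ^ 2 + (u x t).2 ^ 2))) (Set.Ici 0) t)
    ∧ AntitoneOn (fun τ => ∫ x in QS, x.2 * ρ x τ) (Set.Ici 0)
    ∧ ∫⁻ t in Set.Ioi (0 : ℝ),
          ENNReal.ofReal (∫ x in QS, ((u x t).1 ^ 2 + (u x t).2 ^ 2))
        ≤ ENNReal.ofReal ((∫ x in QS, x.2 * ρ₀ x) + 2 * π ^ 3 * ⨆ x : ↥QS, |ρ₀ ↑x|) := by
  obtain rfl : ρ₀ = fun x => ρ x 0 := funext fun x => (hinit x).symm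
  have hE : ∀ t ∈ Ici 0, HasDerivAt (ipmEnergy ρ) (-ipmDissipation u t) t :=
    fun t ht => hsol.hasDerivAt_ipmEnergy ht
  have hD : ∀ t ∈ Ioi 0, 0 ≤ ipmDissipation u t :=
    fun t _ => setIntegral_nonneg measurableSet_QS fun x _ => by positivity
  have : CompactSpace QS := isCompact_iff_compactSpace.1 isCompact_QS
  have hbdd : BddAbove (range fun x : QS => |ρ x 0|) :=
    (isCompact_range
      ((hsol.contDiff_rho_slice 0).continuous.comp continuous_subtype_val).abs).bddAbove
  have h0 : ∀ x ∈ QS, |ρ x 0| ≤ ⨆ x : QS, |ρ x 0| := fun x hx => le_ciSup hbdd ⟨x, hx⟩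
  refine ⟨fun t ht => (hE t ht).hasDerivWithinAt, antitoneOn_Ici_of_hasDerivAt_neg hE hD, ?_⟩
  have h := lintegral_Ioi_le_of_hasDerivAt_neg hE hD fun t ht => hsol.neg_le_ipmEnergy h0 ht
  rwa [sub_neg_eq_add] at h

/-- On the strip `S = T × [-π,π]`, along any global smooth solution of IPM,
`E(t) = ∫_S x₂ ρ(x,t) dx` satisfies `E'(t) = -∫_S |u(x,t)|² dx` for `t ≥ 0`; in particular `E` is
nonincreasing on `[0,∞)` and `∫₀^∞ ∫_S |u|² dx dt ≤ E(0) + 2π³ sup|ρ₀|`. -/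
theorem ipm_strip_energy
    (ρ₀ : Pt → ℝ) (hρ₀smooth : ContDiff ℝ (⊤ : ℕ∞) ρ₀) (hρ₀per : Per1 ρ₀)
    (ρ : Pt → ℝ → ℝ) (u : Pt → ℝ → Pt) (p : Pt → ℝ → ℝ)
    (hsol : IsIPMSolS ρ u p)
    (hinit : ∀ x : Pt, ρ x 0 = ρ₀ x) :
    (∀ t : ℝ, 0 ≤ t →
        HasDerivWithinAt (fun τ => ∫ x in QS, x.2 * ρ x τ)
          (-(∫ x in QS, ((u x t).1 ^ 2 + (u x t).2 ^ 2))) (Set.Ici 0) t)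
    ∧ AntitoneOn (fun τ => ∫ x in QS, x.2 * ρ x τ) (Set.Ici 0)
    ∧ ∫⁻ t in Set.Ioi (0 : ℝ),
          ENNReal.ofReal (∫ x in QS, ((u x t).1 ^ 2 + (u x t).2 ^ 2))
        ≤ ENNReal.ofReal ((∫ x in QS, x.2 * ρ₀ x) + 2 * π ^ 3 * ⨆ x : ↥QS, |ρ₀ ↑x|) :=
  ipm_strip_energy_general ρ₀ ρ u p hsol hinit
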